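/- arXiv:1309.0959 — 6 statements merged into one kernel-verified Lean document; each statement's English description precedes it below -/
import Mathlib

section
/- Suppose p, q, r : ℤ → ℝ satisfy r_{2n}=0, r_{2n+1}>0, q_{2n}=p_{2n}p_{2n+1}/r_{2n+1}, and define D_n = q_{2n-1}p_{2n-2}p_{2n+1} - p_{2n-2}p_{2n}r_{2n+1} - p_{2n-1}p_{2n+1}r_{2n-1}. If D_n ≠ 0 for all n, then the sequences ρ_{2n+1}=0, ρ_{2n} = r_{2n-1}r_{2n+1}/D_n, π_{2n+1} = -p_{2n+3}ρ_{2n+2}/r_{2n+3}, π_{2n} = -p_{2n-2}ρ_{2n}/r_{2n-1}, σ_{2n+1} = p_{2n}p_{2n+3}ρ_{2n+2}/(r_{2n+1}r_{2n+3}), together with the stated σ_{2n}, satisfy the diagonal equation of AA^{-1}=I: r_{n+2}ρ_{n+2} + p_{n+1}π_{n+1} + q_nσ_n + p_nπ_n + r_nρ_n = 1 for all n (Kronecker delta equation on the main diagonal). -/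
/-!
Write `s = r_{2m+1}`. After substituting `π_{2m+1}`, the defining relation
`ρ_{2m+2} D_{m+1} = r_{2m+1} r_{2m+3}` reads
`s p_{2m+1} π_{2m+1} - p_{2m} (q_{2m+1} π_{2m+1} + p_{2m+2} ρ_{2m+2}) = s`,
and this is `s` times the diagonal equation at `2m+1`, since `s π_{2m+2} = -p_{2m} ρ_{2m+2}` and
`s σ_{2m+1} = -p_{2m} π_{2m+1}`.

At `2m`, the formula for `σ_{2m}` is the least-squares solution of the two off-diagonal equations
`p_{2m} σ_{2m} = -X`, `p_{2m+1} σ_{2m} = -Y`. They are consistent, `p_{2m+1} X = p_{2m} Y`,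
because the relations for `ρ_{2m} D_m` and `ρ_{2m+2} D_{m+1}` contribute `-s` and `s` to the
difference. So `p_{2m+1} σ_{2m} = -Y`, and together with `s q_{2m} = p_{2m} p_{2m+1}` this turns
`s` times the diagonal equation at `2m` into the same relation as before.
-/

theorem mul_eq_neg_of_leastSquares {K : Type*} [Field K] {a b x y s : K}
    (hab : a ^ 2 + b ^ 2 ≠ 0) (hxy : b * x = a * y)
    (hs : s = -(a * x + b * y) / (a ^ 2 + b ^ 2)) : b * s = -y := by
  rw [hs, mul_div_assoc', div_eq_iff hab]
  linear_combination (-a) * hxy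

namespace PentadiagonalInverse

/-- The paper's `D_n`. -/
def pivot (p q r : ℤ → ℝ) (n : ℤ) : ℝ :=
  q (2 * n - 1) * p (2 * n - 2) * p (2 * n + 1) - p (2 * n - 2) * p (2 * n) * r (2 * n + 1)
    - p (2 * n - 1) * p (2 * n + 1) * r (2 * n - 1)

def diagEntry (p q r ρ π σ : ℤ → ℝ) (n : ℤ) : ℝ :=
  r (n + 2) * ρ (n + 2) + p (n + 1) * π (n + 1) + q n * σ n + p n * π n + r n * ρ n

variable {p q r ρ π σ : ℤ → ℝ}

theorem pivot_succ_identity (hr : ∀ n : ℤ, r (2 * n + 1) ≠ 0)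
    (hρD : ∀ n : ℤ, ρ (2 * n) * pivot p q r n = r (2 * n - 1) * r (2 * n + 1))
    (hπo : ∀ n : ℤ, π (2 * n + 1) = -(p (2 * n + 3) * ρ (2 * n + 2)) / r (2 * n + 3))
    (m : ℤ) :
    r (2 * m + 1) * p (2 * m + 1) * π (2 * m + 1)
      - p (2 * m) * (q (2 * m + 1) * π (2 * m + 1) + p (2 * m + 2) * ρ (2 * m + 2))
      = r (2 * m + 1) := by
  have hr3 : r (2 * m + 3) ≠ 0 := by simpa [mul_add, add_assoc] using hr (m + 1)
  have hρD' := hρD (m + 1)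
  simp only [pivot, mul_add, add_assoc, add_sub_assoc] at hρD'
  norm_num at hρD'
  rw [hπo m]
  field_simp
  linear_combination hρD'

theorem pivot_identity (hr : ∀ n : ℤ, r (2 * n + 1) ≠ 0)
    (hρD : ∀ n : ℤ, ρ (2 * n) * pivot p q r n = r (2 * n - 1) * r (2 * n + 1))
    (hπe : ∀ n : ℤ, π (2 * n) = -(p (2 * n - 2) * ρ (2 * n)) / r (2 * n - 1)) (m : ℤ) :
    p (2 * m + 1) * (q (2 * m - 1) * π (2 * m) + p (2 * m - 1) * ρ (2 * m))
      - p (2 * m) * r (2 * m + 1) * π (2 * m) = -r (2 * m + 1) := by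
  have hr1 : r (2 * m - 1) ≠ 0 := by simpa [mul_sub, sub_add] using hr (m - 1)
  have hρD' := hρD m
  unfold pivot at hρD'
  rw [hπe m]
  field_simp
  linear_combination (-1 : ℝ) * hρD'

theorem offDiag_consistent (hr : ∀ n : ℤ, r (2 * n + 1) ≠ 0)
    (hρD : ∀ n : ℤ, ρ (2 * n) * pivot p q r n = r (2 * n - 1) * r (2 * n + 1))
    (hπo : ∀ n : ℤ, π (2 * n + 1) = -(p (2 * n + 3) * ρ (2 * n + 2)) / r (2 * n + 3))
    (hπe : ∀ n : ℤ, π (2 * n) = -(p (2 * n - 2) * ρ (2 * n)) / r (2 * n - 1)) (m : ℤ) :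
    p (2 * m + 1) * (π (2 * m + 1) * r (2 * m + 1) + q (2 * m - 1) * π (2 * m)
        + p (2 * m - 1) * ρ (2 * m))
      = p (2 * m) * (π (2 * m) * r (2 * m + 1) + q (2 * m + 1) * π (2 * m + 1)
        + p (2 * m + 2) * ρ (2 * m + 2)) := by
  linear_combination pivot_succ_identity hr hρD hπo m + pivot_identity hr hρD hπe m

theorem diagEntry_two_mul_add_one (hr : ∀ n : ℤ, r (2 * n + 1) ≠ 0)
    (hρD : ∀ n : ℤ, ρ (2 * n) * pivot p q r n = r (2 * n - 1) * r (2 * n + 1))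
    (hρo : ∀ n : ℤ, ρ (2 * n + 1) = 0)
    (hπo : ∀ n : ℤ, π (2 * n + 1) = -(p (2 * n + 3) * ρ (2 * n + 2)) / r (2 * n + 3))
    (hπe : ∀ n : ℤ, π (2 * n) = -(p (2 * n - 2) * ρ (2 * n)) / r (2 * n - 1))
    (hσo : ∀ n : ℤ, σ (2 * n + 1) =
      p (2 * n) * p (2 * n + 3) * ρ (2 * n + 2) / (r (2 * n + 1) * r (2 * n + 3))) (m : ℤ) :
    diagEntry p q r ρ π σ (2 * m + 1) = 1 := by
  have hr3 : r (2 * m + 3) ≠ 0 := by simpa [mul_add, add_assoc] using hr (m + 1)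
  have hρ3 : ρ (2 * m + 3) = 0 := by simpa [mul_add, add_assoc] using hρo (m + 1)
  have hπ : r (2 * m + 1) * π (2 * m + 2) = -(p (2 * m) * ρ (2 * m + 2)) := by
    have hπe' := hπe (m + 1)
    simp only [mul_add, add_sub_assoc] at hπe'
    norm_num at hπe'
    rw [hπe']
    field_simp [hr m]
  have hσ : r (2 * m + 1) * σ (2 * m + 1) = -(p (2 * m) * π (2 * m + 1)) := by
    rw [hσo m, hπo m]
    field_simp [hr m]
  apply mul_left_cancel₀ (hr m)
  rw [diagEntry, show 2 * m + 1 + 2 = 2 * m + 3 by ring, show 2 * m + 1 + 1 = 2 * m + 2 by ring,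
    hρ3, hρo m]
  linear_combination p (2 * m + 2) * hπ + q (2 * m + 1) * hσ + pivot_succ_identity hr hρD hπo m

theorem diagEntry_two_mul (hre : ∀ n : ℤ, r (2 * n) = 0) (hr : ∀ n : ℤ, r (2 * n + 1) ≠ 0)
    (hq : ∀ n : ℤ, q (2 * n) = p (2 * n) * p (2 * n + 1) / r (2 * n + 1))
    (hρD : ∀ n : ℤ, ρ (2 * n) * pivot p q r n = r (2 * n - 1) * r (2 * n + 1))
    (hπo : ∀ n : ℤ, π (2 * n + 1) = -(p (2 * n + 3) * ρ (2 * n + 2)) / r (2 * n + 3))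
    (hπe : ∀ n : ℤ, π (2 * n) = -(p (2 * n - 2) * ρ (2 * n)) / r (2 * n - 1))
    (hp2 : ∀ n : ℤ, p (2 * n) ^ 2 + p (2 * n + 1) ^ 2 ≠ 0)
    (hσe : ∀ n : ℤ, σ (2 * n) =
      -(p (2 * n) * (π (2 * n + 1) * r (2 * n + 1) + q (2 * n - 1) * π (2 * n)
          + p (2 * n - 1) * ρ (2 * n))
        + p (2 * n + 1) * (π (2 * n) * r (2 * n + 1) + q (2 * n + 1) * π (2 * n + 1)
          + p (2 * n + 2) * ρ (2 * n + 2))) / (p (2 * n) ^ 2 + p (2 * n + 1) ^ 2)) (m : ℤ) :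
    diagEntry p q r ρ π σ (2 * m) = 1 := by
  have hσ := mul_eq_neg_of_leastSquares (hp2 m) (offDiag_consistent hr hρD hπo hπe m) (hσe m)
  have hq' : r (2 * m + 1) * q (2 * m) = p (2 * m) * p (2 * m + 1) := by
    rw [hq m]
    field_simp [hr m]
  have hr2 : r (2 * m + 2) = 0 := by simpa [mul_add] using hre (m + 1)
  apply mul_left_cancel₀ (hr m)
  rw [diagEntry, hre m, hr2]
  linear_combination σ (2 * m) * hq' + p (2 * m) * hσ + pivot_succ_identity hr hρD hπo m

end PentadiagonalInverse

theorem smp_inverse_main_diagonal_equation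
    (p q r ρ π σ D : ℤ → ℝ)
    (hre : ∀ n : ℤ, r (2 * n) = 0) (hro : ∀ n : ℤ, 0 < r (2 * n + 1))
    (hq : ∀ n : ℤ, q (2 * n) = p (2 * n) * p (2 * n + 1) / r (2 * n + 1))
    (hD : ∀ n : ℤ, D n = q (2 * n - 1) * p (2 * n - 2) * p (2 * n + 1)
      - p (2 * n - 2) * p (2 * n) * r (2 * n + 1)
      - p (2 * n - 1) * p (2 * n + 1) * r (2 * n - 1))
    (hDne : ∀ n : ℤ, D n ≠ 0)
    (hρo : ∀ n : ℤ, ρ (2 * n + 1) = 0)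
    (hρe : ∀ n : ℤ, ρ (2 * n) = r (2 * n - 1) * r (2 * n + 1) / D n)
    (hπo : ∀ n : ℤ, π (2 * n + 1) = -(p (2 * n + 3) * ρ (2 * n + 2)) / r (2 * n + 3))
    (hπe : ∀ n : ℤ, π (2 * n) = -(p (2 * n - 2) * ρ (2 * n)) / r (2 * n - 1))
    (hσo : ∀ n : ℤ, σ (2 * n + 1) =
      p (2 * n) * p (2 * n + 3) * ρ (2 * n + 2) / (r (2 * n + 1) * r (2 * n + 3)))
    (hp2 : ∀ n : ℤ, p (2 * n) ^ 2 + p (2 * n + 1) ^ 2 ≠ 0)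
    (hσe : ∀ n : ℤ, σ (2 * n) =
      -(p (2 * n) * (π (2 * n + 1) * r (2 * n + 1) + q (2 * n - 1) * π (2 * n)
          + p (2 * n - 1) * ρ (2 * n))
        + p (2 * n + 1) * (π (2 * n) * r (2 * n + 1) + q (2 * n + 1) * π (2 * n + 1)
          + p (2 * n + 2) * ρ (2 * n + 2))) / (p (2 * n) ^ 2 + p (2 * n + 1) ^ 2)) :
    ∀ n : ℤ, r (n + 2) * ρ (n + 2) + p (n + 1) * π (n + 1) + q n * σ n
      + p n * π n + r n * ρ n = 1 := by
  have hr : ∀ n : ℤ, r (2 * n + 1) ≠ 0 := fun n => (hro n).ne'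
  have hρD : ∀ n : ℤ,
      ρ (2 * n) * PentadiagonalInverse.pivot p q r n = r (2 * n - 1) * r (2 * n + 1) := fun n => by
    rw [hρe, PentadiagonalInverse.pivot, ← hD, div_mul_cancel₀ _ (hDne n)]
  intro n
  obtain ⟨m, rfl | rfl⟩ := Int.even_or_odd' n
  · exact PentadiagonalInverse.diagEntry_two_mul hre hr hq hρD hπo hπe hp2 hσe m
  · exact PentadiagonalInverse.diagEntry_two_mul_add_one hr hρD hρo hπo hπe hσo m
end

section
/- With the definitions of the previous context (D_n ≠ 0, q_{2n}=p_{2n}p_{2n+1}/r_{2n+1}, and the formulas for ρ, π, σ), the sequences satisfy the third-upper-diagonal equation of AA^{-1}=I: r_{n+1}π_{n+2} + p_n ρ_{n+2} = 0 for all n ∈ ℤ. -/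
section ThirdDiagonal

variable {p r ρ π : ℤ → ℝ}

theorem third_diagonal_eq_zero_of_even (hro : ∀ n : ℤ, 0 < r (2 * n + 1))
    (hπe : ∀ n : ℤ, π (2 * n) = -(p (2 * n - 2) * ρ (2 * n)) / r (2 * n - 1)) (m : ℤ) :
    r (2 * m + 1) * π (2 * m + 2) + p (2 * m) * ρ (2 * m + 2) = 0 := by
  have hπ : π (2 * m + 2) = -(p (2 * m) * ρ (2 * m + 2)) / r (2 * m + 1) := by
    convert hπe (m + 1) using 3 <;> ring_nf
  rw [hπ, mul_div_cancel₀ _ (hro m).ne']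
  ring

theorem third_diagonal_eq_zero_of_odd (hre : ∀ n : ℤ, r (2 * n) = 0)
    (hρo : ∀ n : ℤ, ρ (2 * n + 1) = 0) (m : ℤ) :
    r (2 * m + 1 + 1) * π (2 * m + 1 + 2) + p (2 * m + 1) * ρ (2 * m + 1 + 2) = 0 := by
  rw [show 2 * m + 1 + 1 = 2 * (m + 1) by ring, show 2 * m + 1 + 2 = 2 * (m + 1) + 1 by ring,
    hre, hρo]
  ring

end ThirdDiagonal

theorem smp_inverse_third_diagonal_equation_general
    (p r ρ π : ℤ → ℝ)
    (hre : ∀ n : ℤ, r (2 * n) = 0) (hro : ∀ n : ℤ, 0 < r (2 * n + 1))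
    (hρo : ∀ n : ℤ, ρ (2 * n + 1) = 0)
    (hπe : ∀ n : ℤ, π (2 * n) = -(p (2 * n - 2) * ρ (2 * n)) / r (2 * n - 1)) :
    ∀ n : ℤ, r (n + 1) * π (n + 2) + p n * ρ (n + 2) = 0 := by
  intro n
  obtain ⟨m, rfl | rfl⟩ := Int.even_or_odd' n
  · exact third_diagonal_eq_zero_of_even hro hπe m
  · exact third_diagonal_eq_zero_of_odd hre hρo m

theorem smp_inverse_third_diagonal_equation
    (p q r ρ π D : ℤ → ℝ)
    (hre : ∀ n : ℤ, r (2 * n) = 0) (hro : ∀ n : ℤ, 0 < r (2 * n + 1))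
    (hq : ∀ n : ℤ, q (2 * n) = p (2 * n) * p (2 * n + 1) / r (2 * n + 1))
    (hD : ∀ n : ℤ, D n = q (2 * n - 1) * p (2 * n - 2) * p (2 * n + 1)
      - p (2 * n - 2) * p (2 * n) * r (2 * n + 1)
      - p (2 * n - 1) * p (2 * n + 1) * r (2 * n - 1))
    (hDne : ∀ n : ℤ, D n ≠ 0)
    (hρo : ∀ n : ℤ, ρ (2 * n + 1) = 0)
    (hρe : ∀ n : ℤ, ρ (2 * n) = r (2 * n - 1) * r (2 * n + 1) / D n)
    (hπo : ∀ n : ℤ, π (2 * n + 1) = -(p (2 * n + 3) * ρ (2 * n + 2)) / r (2 * n + 3))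
    (hπe : ∀ n : ℤ, π (2 * n) = -(p (2 * n - 2) * ρ (2 * n)) / r (2 * n - 1)) :
    ∀ n : ℤ, r (n + 1) * π (n + 2) + p n * ρ (n + 2) = 0 :=
  smp_inverse_third_diagonal_equation_general p r ρ π hre hro hρo hπe
end

section
/- With the same definitions, the second-upper-diagonal equation of AA^{-1}=I holds: r_n σ_n + p_{n+1}π_{n+2} + q_n ρ_{n+2} = 0 for all n ∈ ℤ (appropriately indexed so the even and odd cases both hold). -/
/-!
For even `n` the coefficient `r (n + 2)` vanishes, and `q n = p n p (n + 1) / r (n + 1)` cancels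
`p (n + 1) π (n + 2)`. For odd `n` the entry `ρ (n + 2)` vanishes, and the factor `r (n + 2)` of
`σ (n + 2)` cancels against its denominator, leaving exactly `-p (n + 1) π (n + 2)`.
-/

section SecondDiagonal

variable {p q r ρ π σ : ℤ → ℝ}

theorem second_diagonal_of_r_eq_zero (k : ℤ) (hr : r (k + 2) = 0)
    (hπ : π (k + 2) = -(p k * ρ (k + 2)) / r (k + 1))
    (hq : q k = p k * p (k + 1) / r (k + 1)) :
    r (k + 2) * σ (k + 2) + p (k + 1) * π (k + 2) + q k * ρ (k + 2) = 0 := by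
  rw [hr, hπ, hq]
  ring

theorem second_diagonal_of_rho_eq_zero (k : ℤ) (hr : r (k + 2) ≠ 0) (hρ : ρ (k + 2) = 0)
    (hσ : σ (k + 2) = p (k + 1) * p (k + 4) * ρ (k + 3) / (r (k + 2) * r (k + 4)))
    (hπ : π (k + 2) = -(p (k + 4) * ρ (k + 3)) / r (k + 4)) :
    r (k + 2) * σ (k + 2) + p (k + 1) * π (k + 2) + q k * ρ (k + 2) = 0 := by
  rw [hρ, hσ, hπ]
  field_simp
  ring

end SecondDiagonal

theorem smp_inverse_second_diagonal_equation_general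
    (p q r ρ π σ : ℤ → ℝ)
    (hre : ∀ n : ℤ, r (2 * n) = 0) (hro : ∀ n : ℤ, 0 < r (2 * n + 1))
    (hq : ∀ n : ℤ, q (2 * n) = p (2 * n) * p (2 * n + 1) / r (2 * n + 1))
    (hρo : ∀ n : ℤ, ρ (2 * n + 1) = 0)
    (hπo : ∀ n : ℤ, π (2 * n + 1) = -(p (2 * n + 3) * ρ (2 * n + 2)) / r (2 * n + 3))
    (hπe : ∀ n : ℤ, π (2 * n) = -(p (2 * n - 2) * ρ (2 * n)) / r (2 * n - 1))
    (hσo : ∀ n : ℤ, σ (2 * n + 1) =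
      p (2 * n) * p (2 * n + 3) * ρ (2 * n + 2) / (r (2 * n + 1) * r (2 * n + 3))) :
    ∀ n : ℤ, r (n + 2) * σ (n + 2) + p (n + 1) * π (n + 2) + q n * ρ (n + 2) = 0 := by
  intro n
  obtain ⟨m, rfl | rfl⟩ := Int.even_or_odd' n
  · refine second_diagonal_of_r_eq_zero _ ?_ ?_ (hq m)
    · have h := hre (m + 1); ring_nf at h ⊢; exact h
    · have h := hπe (m + 1); ring_nf at h ⊢; exact h
  · refine second_diagonal_of_rho_eq_zero _ ?_ ?_ ?_ ?_
    · have h := (hro (m + 1)).ne'; ring_nf at h ⊢; exact h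
    · have h := hρo (m + 1); ring_nf at h ⊢; exact h
    · have h := hσo (m + 1); ring_nf at h ⊢; exact h
    · have h := hπo (m + 1); ring_nf at h ⊢; exact h

theorem smp_inverse_second_diagonal_equation
    (p q r ρ π σ D : ℤ → ℝ)
    (hre : ∀ n : ℤ, r (2 * n) = 0) (hro : ∀ n : ℤ, 0 < r (2 * n + 1))
    (hq : ∀ n : ℤ, q (2 * n) = p (2 * n) * p (2 * n + 1) / r (2 * n + 1))
    (hD : ∀ n : ℤ, D n = q (2 * n - 1) * p (2 * n - 2) * p (2 * n + 1)
      - p (2 * n - 2) * p (2 * n) * r (2 * n + 1)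
      - p (2 * n - 1) * p (2 * n + 1) * r (2 * n - 1))
    (hDne : ∀ n : ℤ, D n ≠ 0)
    (hp2 : ∀ n : ℤ, p (2 * n) ^ 2 + p (2 * n + 1) ^ 2 ≠ 0)
    (hρo : ∀ n : ℤ, ρ (2 * n + 1) = 0)
    (hρe : ∀ n : ℤ, ρ (2 * n) = r (2 * n - 1) * r (2 * n + 1) / D n)
    (hπo : ∀ n : ℤ, π (2 * n + 1) = -(p (2 * n + 3) * ρ (2 * n + 2)) / r (2 * n + 3))
    (hπe : ∀ n : ℤ, π (2 * n) = -(p (2 * n - 2) * ρ (2 * n)) / r (2 * n - 1))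
    (hσo : ∀ n : ℤ, σ (2 * n + 1) =
      p (2 * n) * p (2 * n + 3) * ρ (2 * n + 2) / (r (2 * n + 1) * r (2 * n + 3)))
    (hσe : ∀ n : ℤ, σ (2 * n) =
      -(p (2 * n) * (π (2 * n + 1) * r (2 * n + 1) + q (2 * n - 1) * π (2 * n)
          + p (2 * n - 1) * ρ (2 * n))
        + p (2 * n + 1) * (π (2 * n) * r (2 * n + 1) + q (2 * n + 1) * π (2 * n + 1)
          + p (2 * n + 2) * ρ (2 * n + 2))) / (p (2 * n) ^ 2 + p (2 * n + 1) ^ 2)) :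
    ∀ n : ℤ, r (n + 2) * σ (n + 2) + p (n + 1) * π (n + 2) + q n * ρ (n + 2) = 0 :=
  smp_inverse_second_diagonal_equation_general p q r ρ π σ hre hro hq hρo hπo hπe hσo
end

section
/- The compatibility condition holds under the SMP relations: if q_{2n}=p_{2n}p_{2n+1}/r_{2n+1} for all n (r_{2n+1}>0), D_k ≠ 0, ρ_{2k}=r_{2k-1}r_{2k+1}/D_k, ρ_{2k+1}=0, π_{2k+1}=-p_{2k+3}ρ_{2k+2}/r_{2k+3}, π_{2k}=-p_{2k-2}ρ_{2k}/r_{2k-1}, then p_{2n+1}(π_{2n+1}r_{2n+1}+q_{2n-1}π_{2n}+p_{2n-1}ρ_{2n}) = p_{2n}(π_{2n}r_{2n+1}+q_{2n+1}π_{2n+1}+p_{2n+2}ρ_{2n+2}) for all n ∈ ℤ. -/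
/-! After substituting the formulas for `ρ` and `π`, the difference of the two sides splits into
a part over `D n` and a part over `D (n + 1)`. The numerator of each part is `∓ r (2n+1)` times
that `D`, so the difference is `-r (2n+1) + r (2n+1) = 0`. -/

/-- Used once with the data of `D n` and once, reflected about the index `2n+1`, with that of
`D (n + 1)`. -/
theorem half_compatibility_eq_neg {K : Type*} [Field K] {a b c d q r s D ρ π : K}
    (hs : s ≠ 0) (hD : D ≠ 0) (hD_eq : D = q * a * c - a * d * r - b * c * s)
    (hρ : ρ = s * r / D) (hπ : π = -(a * ρ) / s) :
    c * (q * π + b * ρ) - d * (π * r) = -r := by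
  rw [hπ, hρ]
  field_simp
  rw [hD_eq]
  ring

theorem smp_compatibility_condition_general
    (p q r ρ π D : ℤ → ℝ)
    (hro : ∀ n : ℤ, 0 < r (2 * n + 1))
    (hD : ∀ n : ℤ, D n = q (2 * n - 1) * p (2 * n - 2) * p (2 * n + 1)
      - p (2 * n - 2) * p (2 * n) * r (2 * n + 1)
      - p (2 * n - 1) * p (2 * n + 1) * r (2 * n - 1))
    (hDne : ∀ n : ℤ, D n ≠ 0)
    (hρe : ∀ n : ℤ, ρ (2 * n) = r (2 * n - 1) * r (2 * n + 1) / D n)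
    (hπo : ∀ n : ℤ, π (2 * n + 1) = -(p (2 * n + 3) * ρ (2 * n + 2)) / r (2 * n + 3))
    (hπe : ∀ n : ℤ, π (2 * n) = -(p (2 * n - 2) * ρ (2 * n)) / r (2 * n - 1)) :
    ∀ n : ℤ, p (2 * n + 1) * (π (2 * n + 1) * r (2 * n + 1)
        + q (2 * n - 1) * π (2 * n) + p (2 * n - 1) * ρ (2 * n))
      = p (2 * n) * (π (2 * n) * r (2 * n + 1)
        + q (2 * n + 1) * π (2 * n + 1) + p (2 * n + 2) * ρ (2 * n + 2)) := by
  intro n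
  have hrm1 := (hro (n - 1)).ne'
  have hr3 := (hro (n + 1)).ne'
  have hD1 := hD (n + 1)
  have hρ2 := hρe (n + 1)
  simp only [show 2 * (n - 1) + 1 = 2 * n - 1 by ring, show 2 * (n + 1) = 2 * n + 2 by ring,
    show 2 * n + 2 + 1 = 2 * n + 3 by ring, show 2 * n + 2 - 1 = 2 * n + 1 by ring,
    show 2 * n + 2 - 2 = 2 * n by ring] at hrm1 hr3 hD1 hρ2
  have left := half_compatibility_eq_neg hrm1 (hDne n) (hD n) (hρe n) (hπe n)
  have right := half_compatibility_eq_neg (b := p (2 * n + 2)) (c := p (2 * n))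
    (d := p (2 * n + 1)) (q := q (2 * n + 1)) (r := r (2 * n + 1))
    hr3 (hDne (n + 1)) (by rw [hD1]; ring) (by rw [hρ2, mul_comm]) (hπo n)
  linear_combination left - right

theorem smp_compatibility_condition
    (p q r ρ π D : ℤ → ℝ)
    (hre : ∀ n : ℤ, r (2 * n) = 0) (hro : ∀ n : ℤ, 0 < r (2 * n + 1))
    (hq : ∀ n : ℤ, q (2 * n) = p (2 * n) * p (2 * n + 1) / r (2 * n + 1))
    (hD : ∀ n : ℤ, D n = q (2 * n - 1) * p (2 * n - 2) * p (2 * n + 1)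
      - p (2 * n - 2) * p (2 * n) * r (2 * n + 1)
      - p (2 * n - 1) * p (2 * n + 1) * r (2 * n - 1))
    (hDne : ∀ n : ℤ, D n ≠ 0)
    (hρo : ∀ n : ℤ, ρ (2 * n + 1) = 0)
    (hρe : ∀ n : ℤ, ρ (2 * n) = r (2 * n - 1) * r (2 * n + 1) / D n)
    (hπo : ∀ n : ℤ, π (2 * n + 1) = -(p (2 * n + 3) * ρ (2 * n + 2)) / r (2 * n + 3))
    (hπe : ∀ n : ℤ, π (2 * n) = -(p (2 * n - 2) * ρ (2 * n)) / r (2 * n - 1)) :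
    ∀ n : ℤ, p (2 * n + 1) * (π (2 * n + 1) * r (2 * n + 1)
        + q (2 * n - 1) * π (2 * n) + p (2 * n - 1) * ρ (2 * n))
      = p (2 * n) * (π (2 * n) * r (2 * n + 1)
        + q (2 * n + 1) * π (2 * n + 1) + p (2 * n + 2) * ρ (2 * n + 2)) :=
  smp_compatibility_condition_general p q r ρ π D hro hD hDne hρe hπo hπe
end

section
/- Uniqueness direction of Theorem (free parameters): if A ∈ SMP (i.e., A is SMP-structured, invertible, and A^τ = -SA^{-1}S^{-1} is SMP-structured), with inverse written as A^{-1} = S²P + SΠ + Σ + ΠS^{-1} + PS^{-2} where ρ_{2n+1}=0 and ρ_{2n} ≤ -δ < 0 uniformly, then for all n: ρ_{2n} = r_{2n-1}r_{2n+1}/D_n where D_n = q_{2n-1}p_{2n-2}p_{2n+1} - p_{2n-2}p_{2n}r_{2n+1} - p_{2n-1}p_{2n+1}r_{2n-1}, and in particular D_n is uniformly negative: there exists ε > 0 with D_n ≤ -ε for all n. -/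
theorem smp_uniqueness_rho_formula_and_D_uniformly_negative
    (p q r ρ π σ D : ℤ → ℝ) (M C η δ : ℝ)
    (hη : 0 < η) (hδ : 0 < δ) (hC : 0 < C)
    (hbp : ∀ n : ℤ, |p n| ≤ M) (hbq : ∀ n : ℤ, |q n| ≤ M) (hbr : ∀ n : ℤ, |r n| ≤ M)
    (hre : ∀ n : ℤ, r (2 * n) = 0) (hro : ∀ n : ℤ, η ≤ r (2 * n + 1))
    (hbinv : ∀ n : ℤ, |ρ n| ≤ C ∧ |π n| ≤ C ∧ |σ n| ≤ C)
    (A B : ℤ → ℤ → ℝ)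
    (hA : ∀ i j : ℤ, A i j =
      if i = j then q i else if i = j + 1 then p i else if j = i + 1 then p j
      else if i = j + 2 then r i else if j = i + 2 then r j else 0)
    (hB : ∀ i j : ℤ, B i j =
      if i = j then σ i else if i = j + 1 then π i else if j = i + 1 then π j
      else if i = j + 2 then ρ i else if j = i + 2 then ρ j else 0)
    (hinv : ∀ i j : ℤ, (∑ k ∈ Finset.Icc (i - 2) (i + 2), A i k * B k j) =
      if i = j then 1 else 0)
    (hinv' : ∀ i j : ℤ, (∑ k ∈ Finset.Icc (i - 2) (i + 2), B i k * A k j) =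
      if i = j then 1 else 0)
    (hρo : ∀ n : ℤ, ρ (2 * n + 1) = 0)
    (hρneg : ∀ n : ℤ, ρ (2 * n) ≤ -δ)
    (hD : ∀ n : ℤ, D n = q (2 * n - 1) * p (2 * n - 2) * p (2 * n + 1)
      - p (2 * n - 2) * p (2 * n) * r (2 * n + 1)
      - p (2 * n - 1) * p (2 * n + 1) * r (2 * n - 1)) :
    (∀ n : ℤ, ρ (2 * n) = r (2 * n - 1) * r (2 * n + 1) / D n) ∧
      ∃ ε > 0, ∀ n : ℤ, D n ≤ -ε := by
  have sum5 : ∀ (f : ℤ → ℝ) (a : ℤ), (∑ k ∈ Finset.Icc (a - 2) (a + 2), f k) =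
      f (a - 2) + f (a - 1) + f a + f (a + 1) + f (a + 2) := by
    intro f a
    have h : Finset.Icc (a - 2) (a + 2) = {a - 2, a - 1, a, a + 1, a + 2} := by
      ext x
      simp only [Finset.mem_Icc, Finset.mem_insert, Finset.mem_singleton]
      omega
    rw [h, Finset.sum_insert (by simp only [Finset.mem_insert, Finset.mem_singleton]; omega),
      Finset.sum_insert (by simp only [Finset.mem_insert, Finset.mem_singleton]; omega),
      Finset.sum_insert (by simp only [Finset.mem_insert, Finset.mem_singleton]; omega),
      Finset.sum_insert (by simp only [Finset.mem_singleton]; omega),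
      Finset.sum_singleton]
    ring
  have hAq : ∀ i j : ℤ, i = j → A i j = q i := by
    intro i j h; rw [hA, if_pos h]
  have hAp1 : ∀ i j : ℤ, i = j + 1 → A i j = p i := by
    intro i j h; rw [hA, if_neg (by omega), if_pos h]
  have hAp2 : ∀ i j : ℤ, j = i + 1 → A i j = p j := by
    intro i j h; rw [hA, if_neg (by omega), if_neg (by omega), if_pos h]
  have hAr1 : ∀ i j : ℤ, i = j + 2 → A i j = r i := by
    intro i j h; rw [hA, if_neg (by omega), if_neg (by omega), if_neg (by omega), if_pos h]
  have hAr2 : ∀ i j : ℤ, j = i + 2 → A i j = r j := by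
    intro i j h
    rw [hA, if_neg (by omega), if_neg (by omega), if_neg (by omega), if_neg (by omega), if_pos h]
  have hBq : ∀ i j : ℤ, i = j → B i j = σ j := by
    intro i j h; rw [hB, if_pos h, h]
  have hBp1 : ∀ i j : ℤ, i = j + 1 → B i j = π i := by
    intro i j h; rw [hB, if_neg (by omega), if_pos h]
  have hBp2 : ∀ i j : ℤ, j = i + 1 → B i j = π j := by
    intro i j h; rw [hB, if_neg (by omega), if_neg (by omega), if_pos h]
  have hBr1 : ∀ i j : ℤ, i = j + 2 → B i j = ρ i := by
    intro i j h; rw [hB, if_neg (by omega), if_neg (by omega), if_neg (by omega), if_pos h]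
  have hBr2 : ∀ i j : ℤ, j = i + 2 → B i j = ρ j := by
    intro i j h
    rw [hB, if_neg (by omega), if_neg (by omega), if_neg (by omega), if_neg (by omega), if_pos h]
  have hB0 : ∀ i j : ℤ, j + 2 < i ∨ i + 2 < j → B i j = 0 := by
    intro i j h
    rw [hB, if_neg (by omega), if_neg (by omega), if_neg (by omega), if_neg (by omega),
      if_neg (by omega)]
  -- the five scalar equations, for each n
  have key : ∀ n : ℤ, ρ (2 * n) * D n = r (2 * n - 1) * r (2 * n + 1) := by
    intro n
    have h2 : r (2 * n + 2) = 0 := by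
      have := hre (n + 1); rw [show (2 : ℤ) * (n + 1) = 2 * n + 2 by ring] at this; exact this
    have hρ2 : ρ (2 * n + 2) ≤ -δ := by
      have := hρneg (n + 1); rw [show (2 : ℤ) * (n + 1) = 2 * n + 2 by ring] at this; exact this
    have e1 : p (2 * n - 2) * ρ (2 * n) + r (2 * n - 1) * π (2 * n) = 0 := by
      have e := hinv (2 * n - 3) (2 * n)
      simp only [sum5] at e
      rw [hB0 (2 * n - 3 - 2) (2 * n) (by omega), hB0 (2 * n - 3 - 1) (2 * n) (by omega),
        hB0 (2 * n - 3) (2 * n) (by omega),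
        hAp2 (2 * n - 3) (2 * n - 3 + 1) (by ring), hBr2 (2 * n - 3 + 1) (2 * n) (by ring),
        hAr2 (2 * n - 3) (2 * n - 3 + 2) (by ring), hBp2 (2 * n - 3 + 2) (2 * n) (by ring),
        if_neg (show ¬(2 * n - 3 : ℤ) = 2 * n by omega)] at e
      rw [show (2 * n - 3 + 1 : ℤ) = 2 * n - 2 by ring,
        show (2 * n - 3 + 2 : ℤ) = 2 * n - 1 by ring] at e
      linear_combination e
    have e3 : p (2 * n - 1) * ρ (2 * n) + q (2 * n - 1) * π (2 * n) + p (2 * n) * σ (2 * n)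
        + r (2 * n + 1) * π (2 * n + 1) = 0 := by
      have e := hinv (2 * n - 1) (2 * n)
      simp only [sum5] at e
      rw [hAr1 (2 * n - 1) (2 * n - 1 - 2) (by ring), hB0 (2 * n - 1 - 2) (2 * n) (by omega),
        hAp1 (2 * n - 1) (2 * n - 1 - 1) (by ring), hBr2 (2 * n - 1 - 1) (2 * n) (by ring),
        hAq (2 * n - 1) (2 * n - 1) rfl, hBp2 (2 * n - 1) (2 * n) (by ring),
        hAp2 (2 * n - 1) (2 * n - 1 + 1) (by ring), hBq (2 * n - 1 + 1) (2 * n) (by ring),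
        hAr2 (2 * n - 1) (2 * n - 1 + 2) (by ring), hBp1 (2 * n - 1 + 2) (2 * n) (by ring),
        if_neg (show ¬(2 * n - 1 : ℤ) = 2 * n by omega)] at e
      rw [show (2 * n - 1 + 1 : ℤ) = 2 * n by ring,
        show (2 * n - 1 + 2 : ℤ) = 2 * n + 1 by ring] at e
      linear_combination e
    have e4 : p (2 * n) * π (2 * n) + q (2 * n) * σ (2 * n)
        + p (2 * n + 1) * π (2 * n + 1) = 1 := by
      have e := hinv (2 * n) (2 * n)
      simp only [sum5] at e
      rw [hAr1 (2 * n) (2 * n - 2) (by ring), hBr2 (2 * n - 2) (2 * n) (by ring),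
        hAp1 (2 * n) (2 * n - 1) (by ring), hBp2 (2 * n - 1) (2 * n) (by ring),
        hAq (2 * n) (2 * n) rfl, hBq (2 * n) (2 * n) rfl,
        hAp2 (2 * n) (2 * n + 1) rfl, hBp1 (2 * n + 1) (2 * n) rfl,
        hAr2 (2 * n) (2 * n + 2) rfl, hBr1 (2 * n + 2) (2 * n) rfl] at e
      norm_num at e
      linear_combination e - ρ (2 * n) * hre n - ρ (2 * n + 2) * h2
    have f1 : p (2 * n) * ρ (2 * n + 2) + r (2 * n + 1) * π (2 * n + 2) = 0 := by
      have e := hinv (2 * n - 1) (2 * n + 2)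
      simp only [sum5] at e
      rw [hB0 (2 * n - 1 - 2) (2 * n + 2) (by omega), hB0 (2 * n - 1 - 1) (2 * n + 2) (by omega),
        hB0 (2 * n - 1) (2 * n + 2) (by omega),
        hAp2 (2 * n - 1) (2 * n - 1 + 1) (by ring), hBr2 (2 * n - 1 + 1) (2 * n + 2) (by ring),
        hAr2 (2 * n - 1) (2 * n - 1 + 2) (by ring), hBp2 (2 * n - 1 + 2) (2 * n + 2) (by ring),
        if_neg (show ¬(2 * n - 1 : ℤ) = 2 * n + 2 by omega)] at e
      rw [show (2 * n - 1 + 1 : ℤ) = 2 * n by ring,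
        show (2 * n - 1 + 2 : ℤ) = 2 * n + 1 by ring] at e
      linear_combination e
    have f2 : q (2 * n) * ρ (2 * n + 2) + p (2 * n + 1) * π (2 * n + 2) = 0 := by
      have e := hinv (2 * n) (2 * n + 2)
      simp only [sum5] at e
      rw [hB0 (2 * n - 2) (2 * n + 2) (by omega), hB0 (2 * n - 1) (2 * n + 2) (by omega),
        hAq (2 * n) (2 * n) rfl, hBr2 (2 * n) (2 * n + 2) rfl,
        hAp2 (2 * n) (2 * n + 1) rfl, hBp2 (2 * n + 1) (2 * n + 2) (by ring),
        hAr2 (2 * n) (2 * n + 2) rfl, hBq (2 * n + 2) (2 * n + 2) rfl,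
        if_neg (show ¬(2 * n : ℤ) = 2 * n + 2 by omega)] at e
      linear_combination e - σ (2 * n + 2) * h2
    have h0 : ρ (2 * n + 2) * (q (2 * n) * r (2 * n + 1) - p (2 * n) * p (2 * n + 1)) = 0 := by
      linear_combination r (2 * n + 1) * f2 - p (2 * n + 1) * f1
    have hG : q (2 * n) * r (2 * n + 1) - p (2 * n) * p (2 * n + 1) = 0 := by
      rcases mul_eq_zero.mp h0 with h | h
      · exfalso; linarith
      · exact h
    linear_combination ρ (2 * n) * hD n
      + (p (2 * n + 1) * q (2 * n - 1) - r (2 * n + 1) * p (2 * n)) * e1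
      - r (2 * n - 1) * p (2 * n + 1) * e3
      + r (2 * n - 1) * r (2 * n + 1) * e4
      - r (2 * n - 1) * σ (2 * n) * hG
  have hab : ∀ n : ℤ, η * η ≤ r (2 * n - 1) * r (2 * n + 1) := by
    intro n
    have h1 : η ≤ r (2 * n - 1) := by
      have := hro (n - 1); rw [show (2 : ℤ) * (n - 1) + 1 = 2 * n - 1 by ring] at this; exact this
    have h2 := hro n
    nlinarith
  have hDle : ∀ n : ℤ, D n * C ≤ -(η * η) := by
    intro n
    have hk := key n
    have habn := hab n
    have hρle := hρneg n
    have hρge : -C ≤ ρ (2 * n) := (abs_le.mp (hbinv (2 * n)).1).1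
    have hDneg : D n < 0 := by
      by_contra h
      push_neg at h
      nlinarith [mul_nonneg h (show (0 : ℝ) ≤ -ρ (2 * n) by linarith)]
    nlinarith [mul_nonneg (show (0 : ℝ) ≤ ρ (2 * n) + C by linarith)
      (show (0 : ℝ) ≤ -D n by linarith)]
  constructor
  · intro n
    have hk := key n
    have habn := hab n
    have hne : D n ≠ 0 := by
      intro h
      rw [h, mul_zero] at hk
      nlinarith
    rw [eq_div_iff hne]
    exact hk
  · refine ⟨η * η / C, by positivity, fun n => ?_⟩
    have := hDle n
    rw [show -(η * η / C) = (-(η * η)) / C by ring, le_div_iff₀ hC]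
    exact this
end

section
/- Boundedness of the candidate inverse: under the hypotheses r_{2n+1} ≥ η > 0, |p_n|, |q_{2n+1}|, |r_n| ≤ M, and D_n ≤ -ε for all n, all six sequences ρ_{2n}, π_{2n}, π_{2n+1}, σ_{2n}, σ_{2n+1} defined by the explicit formulas are uniformly bounded by a constant depending only on M, η, ε; consequently the pentadiagonal operator B = S²P + SΠ + Σ + ΠS^{-1} + PS^{-2} is a bounded operator on ℓ²(ℤ) with ‖B‖ ≤ 5·C(M,η,ε). -/
/-!
Each coefficient is a quotient whose numerator is bounded by a power of `M` and whose denominator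
stays away from zero: `|r_{2n+1}| ≥ η`, `|D_n| ≥ ε`, and, in the averaged formula for `σ_{2n}`,
`p_{2n}² + p_{2n+1}² ≥ ε² / (8 M⁴)` because `|D_n| ≤ 2 M² (|p_{2n}| + |p_{2n+1}|)`.
The operator `B` is a sum of five weighted shifts `f ↦ (c_n f_{n+k})_n` with `|c_n| ≤ C`,
each of norm at most `C` on `ℓ²(ℤ)`.
-/

open scoped ENNReal
open Function

namespace lp

variable {ι 𝕜 E : Type*} [NontriviallyNormedField 𝕜] [NormedAddCommGroup E] [NormedSpace 𝕜 E]
  {p : ℝ≥0∞} {c : ι → 𝕜} {e : ι → ι} {C : ℝ}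

theorem sum_norm_smul_comp_rpow_le (hp : 0 < p.toReal) (he : Injective e) (hC : 0 ≤ C)
    (hc : ∀ i, ‖c i‖ ≤ C) (f : lp (fun _ : ι => E) p) (s : Finset ι) :
    ∑ i ∈ s, ‖c i • f (e i)‖ ^ p.toReal ≤ (C * ‖f‖) ^ p.toReal :=
  calc ∑ i ∈ s, ‖c i • f (e i)‖ ^ p.toReal
      ≤ ∑ i ∈ s, C ^ p.toReal * ‖f (e i)‖ ^ p.toReal := by
        gcongr with i
        rw [← Real.mul_rpow hC (norm_nonneg _)]
        gcongr
        exact (norm_smul_le _ _).trans (by gcongr; exact hc i)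
    _ = C ^ p.toReal * ∑ j ∈ s.map ⟨e, he⟩, ‖f j‖ ^ p.toReal := by
        rw [Finset.sum_map, Finset.mul_sum]; rfl
    _ ≤ C ^ p.toReal * ‖f‖ ^ p.toReal := by
        gcongr
        exact sum_rpow_le_norm_rpow hp f _
    _ = (C * ‖f‖) ^ p.toReal := by rw [Real.mul_rpow hC (norm_nonneg' f)]

theorem memℓp_smul_comp (hp : 0 < p.toReal) (he : Injective e) (hC : 0 ≤ C)
    (hc : ∀ i, ‖c i‖ ≤ C) (f : lp (fun _ : ι => E) p) :
    Memℓp (fun i => c i • f (e i)) p :=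
  memℓp_gen' (sum_norm_smul_comp_rpow_le hp he hC hc f)

theorem norm_smul_comp_le [Fact (1 ≤ p)] (hp : 0 < p.toReal) (he : Injective e) (hC : 0 ≤ C)
    (hc : ∀ i, ‖c i‖ ≤ C) (f : lp (fun _ : ι => E) p) :
    ‖(⟨_, memℓp_smul_comp hp he hC hc f⟩ : lp (fun _ : ι => E) p)‖ ≤ C * ‖f‖ :=
  norm_le_of_forall_sum_le hp (by positivity) (sum_norm_smul_comp_rpow_le hp he hC hc f)

theorem opNorm_le_card_mul_of_apply_eq_sum [Fact (1 ≤ p)] {J : Type*} [Fintype J]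
    (hp : 0 < p.toReal) {d : J → ι → 𝕜} {e : J → ι → ι} (he : ∀ j, Injective (e j))
    (hC : 0 ≤ C) (hd : ∀ j i, ‖d j i‖ ≤ C) (B : lp (fun _ : ι => E) p →L[𝕜] lp (fun _ : ι => E) p)
    (hB : ∀ f i, B f i = ∑ j, d j i • f (e j i)) :
    ‖B‖ ≤ Fintype.card J * C := by
  refine B.opNorm_le_bound (by positivity) fun f => ?_
  set g : J → lp (fun _ : ι => E) p := fun j => ⟨_, memℓp_smul_comp hp (he j) hC (hd j) f⟩
  have hBf : B f = ∑ j, g j := by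
    ext i
    rw [hB, coeFn_sum, Finset.sum_apply]
  calc ‖B f‖ ≤ ∑ j, ‖g j‖ := hBf ▸ norm_sum_le _ _
    _ ≤ ∑ _j : J, C * ‖f‖ := by
        gcongr with j
        exact norm_smul_comp_le hp (he j) hC (hd j) f
    _ = Fintype.card J * C * ‖f‖ := by simp [mul_assoc]

end lp

theorem abs_mul_le_of_le {x y a b : ℝ} (hx : |x| ≤ a) (hy : |y| ≤ b) : |x * y| ≤ a * b := by
  rw [abs_mul]
  exact mul_le_mul hx hy (abs_nonneg _) ((abs_nonneg _).trans hx)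

theorem abs_div_le_of_le {x y a b : ℝ} (hx : |x| ≤ a) (hy : b ≤ |y|) (hb : 0 < b) :
    |x / y| ≤ a / b := by
  rw [abs_div]
  exact div_le_div₀ ((abs_nonneg _).trans hx) hx hb hy

namespace CandidateInverse

variable {p q r ρ π σ D : ℤ → ℝ} {M η ε R P δ : ℝ}

theorem abs_rho_le (hε : 0 < ε) (hbr : ∀ n, |r n| ≤ M) (hDneg : ∀ n, D n ≤ -ε)
    (hρo : ∀ n, ρ (2 * n + 1) = 0)
    (hρe : ∀ n, ρ (2 * n) = r (2 * n - 1) * r (2 * n + 1) / D n) (n : ℤ) :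
    |ρ n| ≤ M ^ 2 / ε := by
  obtain ⟨k, rfl | rfl⟩ := Int.even_or_odd' n
  · rw [hρe, sq]
    exact abs_div_le_of_le (abs_mul_le_of_le (hbr _) (hbr _))
      (le_abs.mpr (Or.inr (by linarith [hDneg k]))) hε
  · rw [hρo, abs_zero]
    have := (abs_nonneg _).trans (hbr 0)
    positivity

theorem le_abs_r_of_odd (hro : ∀ n, η ≤ r (2 * n + 1)) {m : ℤ} (hm : Odd m) : η ≤ |r m| := by
  obtain ⟨k, rfl⟩ := hm
  exact (hro k).trans (le_abs_self _)

theorem abs_pi_le (hη : 0 < η) (hbp : ∀ n, |p n| ≤ M) (hro : ∀ n, η ≤ r (2 * n + 1))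
    (hρ : ∀ n, |ρ n| ≤ R)
    (hπo : ∀ n, π (2 * n + 1) = -(p (2 * n + 3) * ρ (2 * n + 2)) / r (2 * n + 3))
    (hπe : ∀ n, π (2 * n) = -(p (2 * n - 2) * ρ (2 * n)) / r (2 * n - 1)) (n : ℤ) :
    |π n| ≤ M * R / η := by
  obtain ⟨k, rfl | rfl⟩ := Int.even_or_odd' n
  · rw [hπe, neg_div, abs_neg]
    exact abs_div_le_of_le (abs_mul_le_of_le (hbp _) (hρ _))
      (le_abs_r_of_odd hro ⟨k - 1, by ring⟩) hη
  · rw [hπo, neg_div, abs_neg]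
    exact abs_div_le_of_le (abs_mul_le_of_le (hbp _) (hρ _))
      (le_abs_r_of_odd hro ⟨k + 1, by ring⟩) hη

theorem abs_sigma_odd_le (hη : 0 < η) (hbp : ∀ n, |p n| ≤ M) (hro : ∀ n, η ≤ r (2 * n + 1))
    (hρ : ∀ n, |ρ n| ≤ R)
    (hσo : ∀ n, σ (2 * n + 1) =
      p (2 * n) * p (2 * n + 3) * ρ (2 * n + 2) / (r (2 * n + 1) * r (2 * n + 3))) (k : ℤ) :
    |σ (2 * k + 1)| ≤ M ^ 2 * R / η ^ 2 := by
  rw [hσo, sq, sq]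
  refine abs_div_le_of_le (abs_mul_le_of_le (abs_mul_le_of_le (hbp _) (hbp _)) (hρ _)) ?_
    (by positivity)
  rw [abs_mul]
  exact mul_le_mul (le_abs_r_of_odd hro ⟨k, rfl⟩) (le_abs_r_of_odd hro ⟨k + 1, by ring⟩)
    hη.le (abs_nonneg _)

theorem abs_D_le (hbp : ∀ n, |p n| ≤ M) (hbq : ∀ n, |q (2 * n + 1)| ≤ M) (hbr : ∀ n, |r n| ≤ M)
    (hD : ∀ n, D n = q (2 * n - 1) * p (2 * n - 2) * p (2 * n + 1)
      - p (2 * n - 2) * p (2 * n) * r (2 * n + 1)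
      - p (2 * n - 1) * p (2 * n + 1) * r (2 * n - 1)) (k : ℤ) :
    |D k| ≤ 2 * M ^ 2 * (|p (2 * k)| + |p (2 * k + 1)|) := by
  have hq : |q (2 * k - 1)| ≤ M := (show 2 * (k - 1) + 1 = 2 * k - 1 by ring) ▸ hbq (k - 1)
  have h₁ : |q (2 * k - 1) * p (2 * k - 2) * p (2 * k + 1)| ≤ M * M * |p (2 * k + 1)| :=
    abs_mul_le_of_le (abs_mul_le_of_le hq (hbp _)) le_rfl
  have h₂ : |p (2 * k - 2) * p (2 * k) * r (2 * k + 1)| ≤ M * |p (2 * k)| * M :=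
    abs_mul_le_of_le (abs_mul_le_of_le (hbp _) le_rfl) (hbr _)
  have h₃ : |p (2 * k - 1) * p (2 * k + 1) * r (2 * k - 1)| ≤ M * |p (2 * k + 1)| * M :=
    abs_mul_le_of_le (abs_mul_le_of_le (hbp _) le_rfl) (hbr _)
  have hM : 0 ≤ M := (abs_nonneg _).trans (hbp 0)
  calc |D k| ≤ |q (2 * k - 1) * p (2 * k - 2) * p (2 * k + 1)|
        + |p (2 * k - 2) * p (2 * k) * r (2 * k + 1)|
        + |p (2 * k - 1) * p (2 * k + 1) * r (2 * k - 1)| := by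
        rw [hD]
        exact (abs_sub _ _).trans (add_le_add_left (abs_sub _ _) _)
    _ ≤ 2 * M ^ 2 * (|p (2 * k)| + |p (2 * k + 1)|) := by
        nlinarith [abs_nonneg (p (2 * k)), mul_nonneg (sq_nonneg M) (abs_nonneg (p (2 * k)))]

theorem div_le_sq_add_sq_of_le {x y : ℝ} (hε : 0 ≤ ε) (h : ε ≤ 2 * M ^ 2 * (|x| + |y|)) :
    ε ^ 2 / (8 * M ^ 4) ≤ x ^ 2 + y ^ 2 := by
  refine div_le_of_le_mul₀ (by positivity) (by positivity) ?_
  rw [← sq_abs x, ← sq_abs y]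
  nlinarith [pow_le_pow_left₀ hε h 2,
    mul_nonneg (pow_nonneg (sq_nonneg M) 2) (sq_nonneg (|x| - |y|))]

theorem div_le_sq_add_sq (hε : 0 < ε) (hbp : ∀ n, |p n| ≤ M) (hbq : ∀ n, |q (2 * n + 1)| ≤ M)
    (hbr : ∀ n, |r n| ≤ M)
    (hD : ∀ n, D n = q (2 * n - 1) * p (2 * n - 2) * p (2 * n + 1)
      - p (2 * n - 2) * p (2 * n) * r (2 * n + 1)
      - p (2 * n - 1) * p (2 * n + 1) * r (2 * n - 1))
    (hDneg : ∀ n, D n ≤ -ε) (k : ℤ) :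
    ε ^ 2 / (8 * M ^ 4) ≤ p (2 * k) ^ 2 + p (2 * k + 1) ^ 2 :=
  div_le_sq_add_sq_of_le hε.le <|
    (le_abs.mpr (Or.inr (by linarith [hDneg k]))).trans (abs_D_le hbp hbq hbr hD k)

theorem abs_sigma_even_le (hbp : ∀ n, |p n| ≤ M) (hbq : ∀ n, |q (2 * n + 1)| ≤ M)
    (hbr : ∀ n, |r n| ≤ M) (hρ : ∀ n, |ρ n| ≤ R) (hπ : ∀ n, |π n| ≤ P) (hδ0 : 0 < δ)
    (hδ : ∀ k, δ ≤ p (2 * k) ^ 2 + p (2 * k + 1) ^ 2)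
    (hσe : ∀ n, σ (2 * n) =
      -(p (2 * n) * (π (2 * n + 1) * r (2 * n + 1) + q (2 * n - 1) * π (2 * n)
          + p (2 * n - 1) * ρ (2 * n))
        + p (2 * n + 1) * (π (2 * n) * r (2 * n + 1) + q (2 * n + 1) * π (2 * n + 1)
          + p (2 * n + 2) * ρ (2 * n + 2))) / (p (2 * n) ^ 2 + p (2 * n + 1) ^ 2)) (k : ℤ) :
    |σ (2 * k)| ≤ 2 * M ^ 2 * (2 * P + R) / δ := by
  have hbracket : ∀ {a b c d e f g}, |q d| ≤ M →
      |p a * (π b * r c + q d * π e + p f * ρ g)| ≤ M * (M * (2 * P + R)) := by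
    intro a b c d e f g hq
    refine abs_mul_le_of_le (hbp a) ?_
    have := abs_add_le (π b * r c + q d * π e) (p f * ρ g)
    have := abs_add_le (π b * r c) (q d * π e)
    linarith [abs_mul_le_of_le (hπ b) (hbr c), abs_mul_le_of_le hq (hπ e),
      abs_mul_le_of_le (hbp f) (hρ g)]
  have hq : |q (2 * k - 1)| ≤ M := (show 2 * (k - 1) + 1 = 2 * k - 1 by ring) ▸ hbq (k - 1)
  rw [hσe, neg_div, abs_neg]
  refine abs_div_le_of_le ((abs_add_le _ _).trans ?_) ((hδ k).trans (le_abs_self _)) hδ0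
  exact (add_le_add (hbracket hq) (hbracket (hbq k))).trans_eq (by ring)

theorem abs_sigma_le (hη : 0 < η) (hbp : ∀ n, |p n| ≤ M) (hbq : ∀ n, |q (2 * n + 1)| ≤ M)
    (hbr : ∀ n, |r n| ≤ M) (hro : ∀ n, η ≤ r (2 * n + 1)) (hρ : ∀ n, |ρ n| ≤ R)
    (hπ : ∀ n, |π n| ≤ P) (hδ0 : 0 < δ) (hδ : ∀ k, δ ≤ p (2 * k) ^ 2 + p (2 * k + 1) ^ 2)
    (hσo : ∀ n, σ (2 * n + 1) =
      p (2 * n) * p (2 * n + 3) * ρ (2 * n + 2) / (r (2 * n + 1) * r (2 * n + 3)))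
    (hσe : ∀ n, σ (2 * n) =
      -(p (2 * n) * (π (2 * n + 1) * r (2 * n + 1) + q (2 * n - 1) * π (2 * n)
          + p (2 * n - 1) * ρ (2 * n))
        + p (2 * n + 1) * (π (2 * n) * r (2 * n + 1) + q (2 * n + 1) * π (2 * n + 1)
          + p (2 * n + 2) * ρ (2 * n + 2))) / (p (2 * n) ^ 2 + p (2 * n + 1) ^ 2)) (n : ℤ) :
    |σ n| ≤ max (2 * M ^ 2 * (2 * P + R) / δ) (M ^ 2 * R / η ^ 2) := by
  obtain ⟨k, rfl | rfl⟩ := Int.even_or_odd' n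
  · exact (abs_sigma_even_le hbp hbq hbr hρ hπ hδ0 hδ hσe k).trans (le_max_left _ _)
  · exact (abs_sigma_odd_le hη hbp hro hρ hσo k).trans (le_max_right _ _)

end CandidateInverse

theorem exists_pos_forall_abs_le {α : Type*} {f g h : α → ℝ} {a b c : ℝ} (hf : ∀ n, |f n| ≤ a)
    (hg : ∀ n, |g n| ≤ b) (hh : ∀ n, |h n| ≤ c) :
    ∃ C > 0, ∀ n, |f n| ≤ C ∧ |g n| ≤ C ∧ |h n| ≤ C :=
  ⟨max 1 (max a (max b c)), by positivity, fun n =>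
    ⟨(hf n).trans (by simp), (hg n).trans (by simp), (hh n).trans (by simp)⟩⟩

theorem smp_candidate_inverse_bounded_general
    (p q r ρ π σ D : ℤ → ℝ) (M η ε : ℝ) (hη : 0 < η) (hε : 0 < ε)
    (hbp : ∀ n : ℤ, |p n| ≤ M) (hbq : ∀ n : ℤ, |q (2 * n + 1)| ≤ M)
    (hbr : ∀ n : ℤ, |r n| ≤ M)
    (hro : ∀ n : ℤ, η ≤ r (2 * n + 1))
    (hD : ∀ n : ℤ, D n = q (2 * n - 1) * p (2 * n - 2) * p (2 * n + 1)
      - p (2 * n - 2) * p (2 * n) * r (2 * n + 1)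
      - p (2 * n - 1) * p (2 * n + 1) * r (2 * n - 1))
    (hDneg : ∀ n : ℤ, D n ≤ -ε)
    (hρo : ∀ n : ℤ, ρ (2 * n + 1) = 0)
    (hρe : ∀ n : ℤ, ρ (2 * n) = r (2 * n - 1) * r (2 * n + 1) / D n)
    (hπo : ∀ n : ℤ, π (2 * n + 1) = -(p (2 * n + 3) * ρ (2 * n + 2)) / r (2 * n + 3))
    (hπe : ∀ n : ℤ, π (2 * n) = -(p (2 * n - 2) * ρ (2 * n)) / r (2 * n - 1))
    (hσo : ∀ n : ℤ, σ (2 * n + 1) =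
      p (2 * n) * p (2 * n + 3) * ρ (2 * n + 2) / (r (2 * n + 1) * r (2 * n + 3)))
    (hσe : ∀ n : ℤ, σ (2 * n) =
      -(p (2 * n) * (π (2 * n + 1) * r (2 * n + 1) + q (2 * n - 1) * π (2 * n)
          + p (2 * n - 1) * ρ (2 * n))
        + p (2 * n + 1) * (π (2 * n) * r (2 * n + 1) + q (2 * n + 1) * π (2 * n + 1)
          + p (2 * n + 2) * ρ (2 * n + 2))) / (p (2 * n) ^ 2 + p (2 * n + 1) ^ 2)) :
    ∃ C > 0, (∀ n : ℤ, |ρ n| ≤ C ∧ |π n| ≤ C ∧ |σ n| ≤ C) ∧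
      ∀ B : lp (fun _ : ℤ => ℂ) 2 →L[ℂ] lp (fun _ : ℤ => ℂ) 2,
        (∀ (f : lp (fun _ : ℤ => ℂ) 2) (n : ℤ),
          (B f) n = (ρ n : ℂ) * f (n - 2) + (π n : ℂ) * f (n - 1) + (σ n : ℂ) * f n
            + (π (n + 1) : ℂ) * f (n + 1) + (ρ (n + 2) : ℂ) * f (n + 2)) →
        ‖B‖ ≤ 5 * C := by
  have hM : 0 < M := hη.trans_le ((hro 0).trans ((le_abs_self _).trans (hbr _)))
  have hρ := CandidateInverse.abs_rho_le hε hbr hDneg hρo hρe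
  have hπ := CandidateInverse.abs_pi_le hη hbp hro hρ hπo hπe
  have hσ := CandidateInverse.abs_sigma_le hη hbp hbq hbr hro hρ hπ (by positivity)
    (CandidateInverse.div_le_sq_add_sq hε hbp hbq hbr hD hDneg) hσo hσe
  obtain ⟨C, hC0, hC⟩ := exists_pos_forall_abs_le hρ hπ hσ
  refine ⟨C, hC0, hC, fun B hB => ?_⟩
  have hd : ∀ j n, ‖![fun n => (ρ n : ℂ), fun n => (π n : ℂ), fun n => (σ n : ℂ),
      fun n => (π (n + 1) : ℂ), fun n => (ρ (n + 2) : ℂ)] j n‖ ≤ C := by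
    intro j n
    fin_cases j <;> simp [hC]
  have hnorm := lp.opNorm_le_card_mul_of_apply_eq_sum (by norm_num)
    (e := fun j n => n + ![-2, -1, 0, 1, 2] j) (fun j => add_left_injective _) hC0.le hd B
    (fun f n => by simp [Fin.sum_univ_five, hB f n, sub_eq_add_neg])
  simpa using hnorm

/-- Boundedness of the candidate inverse: all inverse-coefficient sequences are
uniformly bounded by a constant `C = C(M, η, ε)`, and any pentadiagonal operator `B`
on `ℓ²(ℤ)` realizing them satisfies `‖B‖ ≤ 5 C`. -/
theorem smp_candidate_inverse_bounded
    (p q r ρ π σ D : ℤ → ℝ) (M η ε : ℝ) (hη : 0 < η) (hε : 0 < ε)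
    (hbp : ∀ n : ℤ, |p n| ≤ M) (hbq : ∀ n : ℤ, |q (2 * n + 1)| ≤ M)
    (hbr : ∀ n : ℤ, |r n| ≤ M)
    (hre : ∀ n : ℤ, r (2 * n) = 0) (hro : ∀ n : ℤ, η ≤ r (2 * n + 1))
    (hq : ∀ n : ℤ, q (2 * n) = p (2 * n) * p (2 * n + 1) / r (2 * n + 1))
    (hD : ∀ n : ℤ, D n = q (2 * n - 1) * p (2 * n - 2) * p (2 * n + 1)
      - p (2 * n - 2) * p (2 * n) * r (2 * n + 1)
      - p (2 * n - 1) * p (2 * n + 1) * r (2 * n - 1))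
    (hDneg : ∀ n : ℤ, D n ≤ -ε)
    (hρo : ∀ n : ℤ, ρ (2 * n + 1) = 0)
    (hρe : ∀ n : ℤ, ρ (2 * n) = r (2 * n - 1) * r (2 * n + 1) / D n)
    (hπo : ∀ n : ℤ, π (2 * n + 1) = -(p (2 * n + 3) * ρ (2 * n + 2)) / r (2 * n + 3))
    (hπe : ∀ n : ℤ, π (2 * n) = -(p (2 * n - 2) * ρ (2 * n)) / r (2 * n - 1))
    (hσo : ∀ n : ℤ, σ (2 * n + 1) =
      p (2 * n) * p (2 * n + 3) * ρ (2 * n + 2) / (r (2 * n + 1) * r (2 * n + 3)))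
    (hσe : ∀ n : ℤ, σ (2 * n) =
      -(p (2 * n) * (π (2 * n + 1) * r (2 * n + 1) + q (2 * n - 1) * π (2 * n)
          + p (2 * n - 1) * ρ (2 * n))
        + p (2 * n + 1) * (π (2 * n) * r (2 * n + 1) + q (2 * n + 1) * π (2 * n + 1)
          + p (2 * n + 2) * ρ (2 * n + 2))) / (p (2 * n) ^ 2 + p (2 * n + 1) ^ 2)) :
    ∃ C > 0, (∀ n : ℤ, |ρ n| ≤ C ∧ |π n| ≤ C ∧ |σ n| ≤ C) ∧
      ∀ B : lp (fun _ : ℤ => ℂ) 2 →L[ℂ] lp (fun _ : ℤ => ℂ) 2,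
        (∀ (f : lp (fun _ : ℤ => ℂ) 2) (n : ℤ),
          (B f) n = (ρ n : ℂ) * f (n - 2) + (π n : ℂ) * f (n - 1) + (σ n : ℂ) * f n
            + (π (n + 1) : ℂ) * f (n + 1) + (ρ (n + 2) : ℂ) * f (n + 2)) →
        ‖B‖ ≤ 5 * C :=
  smp_candidate_inverse_bounded_general p q r ρ π σ D M η ε hη hε hbp hbq hbr hro hD hDneg hρo hρe
    hπo hπe hσo hσe
end
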